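/- Let q and a be complex numbers with 0 < |q| < 1 and a ≠ q^{-2m} for all integers m ≥ 1 (so that (aq²;q²)_n never vanishes). Then ∑_{n=1}^∞ (−a)^n q^{n(n+1)/2} (−q;q)_{n−1} / (a q²; q²)_n = ∑_{k=1}^∞ (−a)^k q^{k²}. -/

import Mathlib

open Finset

/-- The finite q-shifted factorial `(a;q)_n`. -/
noncomputable def qPoch (a q : ℂ) (n : ℕ) : ℂ := ∏ j ∈ Finset.range n, (1 - a * q ^ j)

/-- The infinite q-shifted factorial `(a;q)_∞`. -/
noncomputable def qPochInf (a q : ℂ) : ℂ := ∏' j : ℕ, (1 - a * q ^ j)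

/-!
Write `F(b) = ∑ₙ ramanujanSummand q b n` for the left-hand side with `a` replaced by `b`.
Clearing denominators, consecutive summands satisfy a three-term relation that telescopes to
the functional equation `F(b) = -bq - bq F(bq²)`. Iterating it from `b = a` gives
`F(a) = ∑_{j<K} (-a)^{j+1} q^{(j+1)²} + (-a)^K q^{K²} F(aq^{2K})`, and the remainder tends to
zero because `F(aq^{2K})` is bounded uniformly in `K`: the denominators
`(aq^{2K+2};q²)_{n+1}` are products of nonzero factors `1 - aq^{2i}` with `∑ |aq^{2i}| < ∞`,
hence bounded away from zero uniformly in `K` and `n`.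
-/

open Filter Topology

section ProductBounds

variable {ι 𝕜 : Type*} [NormedField 𝕜] {f : ι → 𝕜}

theorem exists_pos_le_norm_prod_one_add (hf : Summable fun i ↦ ‖f i‖) (hne : ∀ i, 1 + f i ≠ 0) :
    ∃ c > 0, ∀ s : Finset ι, c ≤ ‖∏ i ∈ s, (1 + f i)‖ := by
  classical
  obtain ⟨s₀, hs₀⟩ := prod_vanishing_of_summable_norm hf (by norm_num : (0 : ℝ) < 1 / 2)
  set w : ι → ℝ := fun i ↦ min 1 ‖1 + f i‖
  have hw : ∀ i, 0 < w i := fun i ↦ lt_min one_pos (norm_pos_iff.mpr (hne i))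
  refine ⟨(∏ i ∈ s₀, w i) / 2, by have := prod_pos fun i (_ : i ∈ s₀) ↦ hw i; positivity,
    fun s ↦ ?_⟩
  have hfar : ∏ i ∈ s₀, w i ≤ ‖∏ i ∈ s ∩ s₀, (1 + f i)‖ := by
    rw [norm_prod]
    calc ∏ i ∈ s₀, w i ≤ ∏ i ∈ s ∩ s₀, w i :=
          prod_le_prod_of_subset_of_le_one inter_subset_right
            (fun i _ ↦ (hw i).le) fun i _ _ ↦ min_le_left _ _
      _ ≤ ∏ i ∈ s ∩ s₀, ‖1 + f i‖ :=
          prod_le_prod (fun i _ ↦ (hw i).le) fun i _ ↦ min_le_right _ _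
  have hnear : 1 / 2 ≤ ‖∏ i ∈ s \ s₀, (1 + f i)‖ := by
    have h := hs₀ (s \ s₀) sdiff_disjoint
    have := norm_sub_norm_le (1 : 𝕜) (∏ i ∈ s \ s₀, (1 + f i))
    rw [norm_sub_rev, norm_one] at this
    linarith
  rw [← prod_inter_mul_prod_sdiff s s₀, norm_mul]
  calc (∏ i ∈ s₀, w i) / 2 = (∏ i ∈ s₀, w i) * (1 / 2) := by ring
    _ ≤ _ := mul_le_mul hfar hnear (by norm_num) (norm_nonneg _)

end ProductBounds

theorem qPoch_succ (a q : ℂ) (n : ℕ) : qPoch a q (n + 1) = qPoch a q n * (1 - a * q ^ n) :=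
  prod_range_succ _ n

theorem qPoch_succ' (a q : ℂ) (n : ℕ) : qPoch a q (n + 1) = (1 - a) * qPoch (a * q) q n := by
  rw [qPoch, prod_range_succ', mul_comm, qPoch]
  simp only [pow_succ', pow_zero, mul_one, mul_assoc]

theorem qPoch_mul_pow (x q : ℂ) (k n : ℕ) :
    qPoch (x * q ^ k) q n = ∏ i ∈ Ico k (k + n), (1 - x * q ^ i) := by
  rw [prod_Ico_eq_prod_range, Nat.add_sub_cancel_left, qPoch]
  simp only [pow_add, mul_assoc]

theorem norm_qPoch_le (x q : ℂ) (hq : ‖q‖ < 1) (n : ℕ) :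
    ‖qPoch x q n‖ ≤ Real.exp (‖x‖ / (1 - ‖q‖)) := by
  have hsum : ∑ j ∈ range n, ‖-(x * q ^ j)‖ ≤ ‖x‖ / (1 - ‖q‖) := by
    simp only [norm_neg, norm_mul, norm_pow, ← mul_sum]
    rw [div_eq_mul_one_div]
    gcongr
    simpa using geom_sum_Ico_le_of_lt_one (m := 0) (n := n) (norm_nonneg q) hq
  have h := (range n).norm_prod_one_add_sub_one_le fun j ↦ -(x * q ^ j)
  simp only [← sub_eq_add_neg] at h
  calc ‖qPoch x q n‖ ≤ ‖qPoch x q n - 1‖ + 1 := by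
        simpa using norm_le_norm_sub_add (qPoch x q n) 1
    _ ≤ Real.exp (‖x‖ / (1 - ‖q‖)) := by
        have := Real.exp_le_exp.mpr hsum
        rw [qPoch]; linarith

theorem exists_pos_le_norm_qPoch_mul_pow (x q : ℂ) (hq : ‖q‖ < 1)
    (hx : ∀ i : ℕ, 1 - x * q ^ i ≠ 0) :
    ∃ c > 0, ∀ k n : ℕ, c ≤ ‖qPoch (x * q ^ k) q n‖ := by
  have hf : Summable fun i : ℕ ↦ ‖-(x * q ^ i)‖ := by
    simpa [norm_mul, norm_pow] using
      (summable_geometric_of_lt_one (norm_nonneg q) hq).mul_left ‖x‖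
  obtain ⟨c, hc, hle⟩ := exists_pos_le_norm_prod_one_add hf fun i ↦ by
    simpa [← sub_eq_add_neg] using hx i
  refine ⟨c, hc, fun k n ↦ ?_⟩
  simpa [qPoch_mul_pow, ← sub_eq_add_neg] using hle (Ico k (k + n))

theorem add_one_mul_add_two_div_two (n : ℕ) :
    (n + 1) * (n + 2) / 2 = n * (n + 1) / 2 + (n + 1) := by
  rw [show (n + 1) * (n + 2) = n * (n + 1) + (n + 1) * 2 by ring]
  exact Nat.add_mul_div_right _ _ two_pos

theorem summable_pow_mul_pow_triangle {x r : ℝ} (hx : 0 ≤ x) (hr0 : 0 ≤ r) (hr1 : r < 1) :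
    Summable fun n : ℕ ↦ x ^ n * r ^ (n * (n + 1) / 2) := by
  have hlim : Tendsto (fun n : ℕ ↦ x * r ^ (n + 1)) atTop (𝓝 0) := by
    simpa using ((tendsto_pow_atTop_nhds_zero_of_lt_one hr0 hr1).comp
      (tendsto_add_atTop_nat 1)).const_mul x
  refine summable_of_ratio_norm_eventually_le (r := 1 / 2) (by norm_num) ?_
  filter_upwards [hlim.eventually_le_const (by norm_num : (0 : ℝ) < 1 / 2)] with n hn
  rw [Real.norm_of_nonneg (by positivity), Real.norm_of_nonneg (by positivity),
    show (n + 1) * (n + 1 + 1) / 2 = _ from add_one_mul_add_two_div_two n,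
    pow_succ, pow_add]
  calc x ^ n * x * (r ^ (n * (n + 1) / 2) * r ^ (n + 1))
      = (x * r ^ (n + 1)) * (x ^ n * r ^ (n * (n + 1) / 2)) := by ring
    _ ≤ 1 / 2 * (x ^ n * r ^ (n * (n + 1) / 2)) := by gcongr

noncomputable def ramanujanSummand (q b : ℂ) (n : ℕ) : ℂ :=
  (-b) ^ (n + 1) * q ^ ((n + 1) * (n + 2) / 2) * qPoch (-q) q n / qPoch (b * q ^ 2) (q ^ 2) (n + 1)

theorem ramanujanSummand_zero (q b : ℂ) : ramanujanSummand q b 0 = -b * q / (1 - b * q ^ 2) := by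
  simp [ramanujanSummand, qPoch]

theorem ramanujanSummand_succ (q b : ℂ) (n : ℕ) :
    ramanujanSummand q b (n + 1) = ramanujanSummand q b n *
      (-b * q ^ (n + 2) * (1 + q ^ (n + 1))) / (1 - b * q ^ 2 * (q ^ 2) ^ (n + 1)) := by
  rw [ramanujanSummand, ramanujanSummand,
    show (n + 1 + 1) * (n + 1 + 2) / 2 = _ from add_one_mul_add_two_div_two (n + 1),
    qPoch_succ _ _ (n + 1), qPoch_succ (-q), div_mul_eq_mul_div, div_div]
  ring

theorem ramanujanSummand_mul_sq (q b : ℂ) (hb : 1 - b * q ^ 2 ≠ 0) (n : ℕ) :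
    ramanujanSummand q (b * q ^ 2) n = ramanujanSummand q b n *
      (q ^ (2 * n + 2) * (1 - b * q ^ 2)) / (1 - b * q ^ 2 * (q ^ 2) ^ (n + 1)) := by
  have hP : qPoch (b * q ^ 2) (q ^ 2) (n + 1) * (1 - b * q ^ 2 * (q ^ 2) ^ (n + 1)) =
      (1 - b * q ^ 2) * qPoch (b * q ^ 2 * q ^ 2) (q ^ 2) (n + 1) := by
    rw [← qPoch_succ, qPoch_succ']
  rw [ramanujanSummand, ramanujanSummand, div_mul_eq_mul_div, div_div, hP]
  field_simp
  ring

theorem ramanujanSummand_succ_mul (q b : ℂ) (n : ℕ) (h₀ : 1 - b * q ^ 2 ≠ 0)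
    (hₙ : 1 - b * q ^ 2 * (q ^ 2) ^ (n + 1) ≠ 0) :
    ramanujanSummand q b (n + 1) * (1 - b * q ^ (n + 3)) =
      -b * q * (ramanujanSummand q (b * q ^ 2) n + q ^ (n + 1) * ramanujanSummand q b n) := by
  rw [ramanujanSummand_succ, ramanujanSummand_mul_sq q b h₀]
  field_simp
  ring

theorem sum_range_succ_ramanujanSummand (q b : ℂ)
    (hb : ∀ j : ℕ, 1 - b * q ^ 2 * (q ^ 2) ^ j ≠ 0) (M : ℕ) :
    ∑ n ∈ range (M + 1), ramanujanSummand q b n =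
      -b * q - b * q * ∑ n ∈ range M, ramanujanSummand q (b * q ^ 2) n +
        b * q ^ (M + 2) * ramanujanSummand q b M := by
  have h₀ : 1 - b * q ^ 2 ≠ 0 := by simpa using hb 0
  induction M with
  | zero =>
    simp only [zero_add, sum_range_one, sum_range_zero, ramanujanSummand_zero]
    field_simp
    ring
  | succ M ih =>
    rw [sum_range_succ, ih, sum_range_succ]
    linear_combination ramanujanSummand_succ_mul q b M h₀ (hb (M + 1))

theorem tsum_ramanujanSummand (q b : ℂ) (hq : ‖q‖ < 1)
    (hb : ∀ j : ℕ, 1 - b * q ^ 2 * (q ^ 2) ^ j ≠ 0)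
    (hs : Summable (ramanujanSummand q b)) (hs' : Summable (ramanujanSummand q (b * q ^ 2))) :
    ∑' n, ramanujanSummand q b n = -b * q - b * q * ∑' n, ramanujanSummand q (b * q ^ 2) n := by
  have hlim : Tendsto (fun M ↦ b * q ^ (M + 2) * ramanujanSummand q b M) atTop (𝓝 0) := by
    have hpow := (tendsto_pow_atTop_nhds_zero_of_norm_lt_one hq).comp (tendsto_add_atTop_nat 2)
    simpa [mul_assoc] using (hpow.mul hs.tendsto_atTop_zero).const_mul b
  have hpartial := (tendsto_add_atTop_iff_nat 1).mpr hs.hasSum.tendsto_sum_nat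
  simp only [sum_range_succ_ramanujanSummand q b hb] at hpartial
  refine tendsto_nhds_unique hpartial ?_
  simpa using ((hs'.hasSum.tendsto_sum_nat.const_mul (b * q)).const_sub (-b * q)).add hlim

theorem norm_ramanujanSummand_le (q b : ℂ) (hq : ‖q‖ < 1) {c : ℝ} (hc : 0 < c) (n : ℕ)
    (hP : c ≤ ‖qPoch (b * q ^ 2) (q ^ 2) (n + 1)‖) :
    ‖ramanujanSummand q b n‖ ≤
      Real.exp (‖q‖ / (1 - ‖q‖)) / c * (‖b‖ ^ (n + 1) * ‖q‖ ^ ((n + 1) * (n + 2) / 2)) := by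
  rw [ramanujanSummand, norm_div, norm_mul, norm_mul, norm_pow, norm_pow, norm_neg]
  calc ‖b‖ ^ (n + 1) * ‖q‖ ^ ((n + 1) * (n + 2) / 2) * ‖qPoch (-q) q n‖ /
        ‖qPoch (b * q ^ 2) (q ^ 2) (n + 1)‖
      ≤ ‖b‖ ^ (n + 1) * ‖q‖ ^ ((n + 1) * (n + 2) / 2) * Real.exp (‖q‖ / (1 - ‖q‖)) / c := by
        gcongr
        simpa using norm_qPoch_le (-q) q hq n
    _ = _ := by ring

theorem exists_norm_ramanujanSummand_mul_pow_le (q a : ℂ) (hq : ‖q‖ < 1)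
    (ha : ∀ j : ℕ, 1 - a * q ^ 2 * (q ^ 2) ^ j ≠ 0) :
    ∃ C, ∀ k n : ℕ, ‖ramanujanSummand q (a * (q ^ 2) ^ k) n‖ ≤
      C * (‖a‖ ^ (n + 1) * ‖q‖ ^ ((n + 1) * (n + 2) / 2)) := by
  have hq2 : ‖q ^ 2‖ < 1 := by rw [norm_pow]; exact pow_lt_one₀ (norm_nonneg q) hq two_ne_zero
  obtain ⟨c, hc, hle⟩ := exists_pos_le_norm_qPoch_mul_pow (a * q ^ 2) (q ^ 2) hq2 ha
  refine ⟨Real.exp (‖q‖ / (1 - ‖q‖)) / c, fun k n ↦ ?_⟩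
  have hP : c ≤ ‖qPoch (a * (q ^ 2) ^ k * q ^ 2) (q ^ 2) (n + 1)‖ := by
    simpa only [mul_right_comm a] using hle k (n + 1)
  have hb : ‖a * (q ^ 2) ^ k‖ ≤ ‖a‖ := by
    rw [norm_mul, norm_pow]
    exact mul_le_of_le_one_right (norm_nonneg a) (pow_le_one₀ (norm_nonneg _) hq2.le)
  refine (norm_ramanujanSummand_le q _ hq hc n hP).trans ?_
  gcongr

theorem eq_sum_range_add_of_recurrence (a q : ℂ) (F : ℕ → ℂ)
    (hF : ∀ k, F k = -(a * (q ^ 2) ^ k) * q - a * (q ^ 2) ^ k * q * F (k + 1)) (K : ℕ) :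
    F 0 = ∑ j ∈ range K, (-a) ^ (j + 1) * q ^ ((j + 1) ^ 2) + (-a) ^ K * q ^ (K ^ 2) * F K := by
  induction K with
  | zero => simp
  | succ K ih =>
    rw [ih, hF K, sum_range_succ]
    ring

theorem eq_tsum_of_recurrence (a q : ℂ) (hq : ‖q‖ < 1) (F : ℕ → ℂ)
    (hF : ∀ k, F k = -(a * (q ^ 2) ^ k) * q - a * (q ^ 2) ^ k * q * F (k + 1))
    (B : ℝ) (hB : ∀ k, ‖F k‖ ≤ B) :
    F 0 = ∑' k, (-a) ^ (k + 1) * q ^ ((k + 1) ^ 2) := by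
  have hμ := summable_pow_mul_pow_triangle (norm_nonneg a) (norm_nonneg q) hq
  have hterm : ∀ k, ‖(-a) ^ k * q ^ (k ^ 2)‖ ≤ ‖a‖ ^ k * ‖q‖ ^ (k * (k + 1) / 2) := fun k ↦ by
    rw [norm_mul, norm_pow, norm_pow, norm_neg]
    refine mul_le_mul_of_nonneg_left (pow_le_pow_of_le_one (norm_nonneg q) hq.le ?_) (by positivity)
    exact Nat.div_le_of_le_mul (by nlinarith [Nat.le_self_pow two_ne_zero k])
  have hsum : Summable fun k ↦ (-a) ^ (k + 1) * q ^ ((k + 1) ^ 2) :=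
    (summable_nat_add_iff (f := fun k ↦ (-a) ^ k * q ^ (k ^ 2)) 1).mpr (hμ.of_norm_bounded hterm)
  have hrem : Tendsto (fun K ↦ (-a) ^ K * q ^ (K ^ 2) * F K) atTop (𝓝 0) := by
    have hμB := hμ.tendsto_atTop_zero.mul_const B
    rw [zero_mul] at hμB
    refine squeeze_zero_norm (fun K ↦ ?_) hμB
    rw [norm_mul]
    exact mul_le_mul (hterm K) (hB K) (norm_nonneg _) (by positivity)
  have hlim := hsum.hasSum.tendsto_sum_nat.add hrem
  rw [add_zero] at hlim
  simp only [← eq_sum_range_add_of_recurrence a q F hF] at hlim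
  exact tendsto_nhds_unique tendsto_const_nhds hlim

theorem ramanujan_p28_general (q a : ℂ) (hq1 : ‖q‖ < 1)
    (ham : ∀ m : ℕ, 1 ≤ m → a ≠ q ^ (-(2 * m : ℤ))) :
    ∑' n : ℕ, (-a) ^ (n + 1) * q ^ ((n + 1) * (n + 2) / 2) * qPoch (-q) q n /
        qPoch (a * q ^ 2) (q ^ 2) (n + 1)
    = ∑' k : ℕ, (-a) ^ (k + 1) * q ^ ((k + 1) ^ 2) := by
  have ha : ∀ j : ℕ, 1 - a * q ^ 2 * (q ^ 2) ^ j ≠ 0 := by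
    intro j h
    have hprod : a * q ^ (2 * (j + 1)) = 1 := by linear_combination -h
    apply ham (j + 1) (by omega)
    rw [zpow_neg, show 2 * ((j + 1 : ℕ) : ℤ) = ((2 * (j + 1) : ℕ) : ℤ) by push_cast; ring,
      zpow_natCast]
    exact eq_inv_of_mul_eq_one_left hprod
  obtain ⟨C, hC⟩ := exists_norm_ramanujanSummand_mul_pow_le q a hq1 ha
  have hmaj : Summable fun n : ℕ ↦ C * (‖a‖ ^ (n + 1) * ‖q‖ ^ ((n + 1) * (n + 2) / 2)) :=
    ((summable_nat_add_iff 1).mpr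
      (summable_pow_mul_pow_triangle (norm_nonneg a) (norm_nonneg q) hq1)).mul_left C
  have hs : ∀ k, Summable (ramanujanSummand q (a * (q ^ 2) ^ k)) := fun k ↦
    hmaj.of_norm_bounded (hC k)
  have hstep : ∀ k, a * (q ^ 2) ^ k * q ^ 2 = a * (q ^ 2) ^ (k + 1) := fun k ↦ by ring
  have key := eq_tsum_of_recurrence a q hq1 (fun k ↦ ∑' n, ramanujanSummand q (a * (q ^ 2) ^ k) n)
    (fun k ↦ by
      simp only [← hstep k]
      exact tsum_ramanujanSummand q _ hq1 (fun j ↦ by convert ha (k + j) using 2; ring) (hs k)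
        (hstep k ▸ hs (k + 1)))
    _ (fun k ↦ tsum_of_norm_bounded hmaj.hasSum (hC k))
  simpa [ramanujanSummand] using key

/-- Ramanujan's Lost Notebook, p. 28 (Entry 1.6.2 of Andrews–Berndt). -/
theorem ramanujan_p28 (q a : ℂ) (hq0 : 0 < ‖q‖) (hq1 : ‖q‖ < 1)
    (ham : ∀ m : ℕ, 1 ≤ m → a ≠ q ^ (-(2 * m : ℤ))) :
    ∑' n : ℕ, (-a) ^ (n + 1) * q ^ ((n + 1) * (n + 2) / 2) * qPoch (-q) q n /
        qPoch (a * q ^ 2) (q ^ 2) (n + 1)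
    = ∑' k : ℕ, (-a) ^ (k + 1) * q ^ ((k + 1) ^ 2) :=
  ramanujan_p28_general q a hq1 ham
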